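/- Let f : ℤ → [0,∞) and define its step extension f_cont : ℝ → [0,∞) by f_cont(x) := f(l) for x ∈ [l, l+1), l ∈ ℤ. Then for every l ∈ ℤ and every x ∈ [l, l+1) one has M_ℝ^u f_cont(x) ≥ M^u f(l), where M_ℝ^u is the uncentered Hardy–Littlewood maximal operator on ℝ and M^u is the discrete uncentered maximal operator. Consequently, for p ∈ (1,∞), if f ∈ ℓ^p(ℤ) is not identically zero then ‖M^u f‖_{ℓ^p(ℤ)} / ‖f‖_{ℓ^p(ℤ)} ≤ ‖M_ℝ^u f_cont‖_{L^p(ℝ)} / ‖f_cont‖_{L^p(ℝ)}. -/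

import Mathlib

open MeasureTheory ENNReal Filter

noncomputable section

variable {X : Type*} [MeasurableSpace X]

/-- The one-sided ergodic maximal operator `M⁻f(x) = sup_N |(1/(N+1)) Σ_{n=0}^N f(Tⁿx)|`. -/
def maxOS (T : Equiv.Perm X) (f : X → ℝ) (x : X) : ℝ≥0∞ :=
  ⨆ N : ℕ,
    (‖(∑ n ∈ Finset.range (N + 1), f ((T ^ n) x)) / ((N : ℝ) + 1)‖₊ : ℝ≥0∞)

/-- The centered ergodic maximal operator `M^c f(x) = sup_N |(1/(2N+1)) Σ_{n=-N}^N f(Tⁿx)|`. -/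
def maxC (T : Equiv.Perm X) (f : X → ℝ) (x : X) : ℝ≥0∞ :=
  ⨆ N : ℕ,
    (‖(∑ n ∈ Finset.Icc (-(N : ℤ)) (N : ℤ), f ((T ^ n) x)) / (2 * (N : ℝ) + 1)‖₊ : ℝ≥0∞)

/-- The uncentered ergodic maximal operator
`M^u f(x) = sup_{r,s ≥ 0} |(1/(r+s+1)) Σ_{n=-r}^{s} f(Tⁿx)|`. -/
def maxU (T : Equiv.Perm X) (f : X → ℝ) (x : X) : ℝ≥0∞ :=
  ⨆ r : ℕ, ⨆ s : ℕ,
    (‖(∑ n ∈ Finset.Icc (-(r : ℤ)) (s : ℤ), f ((T ^ n) x)) / ((r : ℝ) + (s : ℝ) + 1)‖₊ : ℝ≥0∞)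

/-- The best constant in the weak type (1,1) inequality for a maximal operator `M`:
the smallest `C` with `λ · μ({x : M f(x) ≥ λ}) ≤ C ‖f‖₁` for all `f ∈ L¹(μ)` and all `λ`. -/
def weakConst (μ : Measure X) (M : (X → ℝ) → X → ℝ≥0∞) : ℝ≥0∞ :=
  sInf {C | ∀ f : X → ℝ, Integrable f μ →
    ∀ l : ℝ≥0∞, l * μ {x | l ≤ M f x} ≤ C * eLpNorm f 1 μ}

/-- The best constant in the strong type (p,p) inequality for a maximal operator `M`:
the smallest `C` with `‖M f‖_p ≤ C ‖f‖_p` for all `f ∈ L^p(μ)`. -/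
def strongConst (μ : Measure X) (M : (X → ℝ) → X → ℝ≥0∞) (p : ℝ) : ℝ≥0∞ :=
  sInf {C | ∀ f : X → ℝ, MemLp f (ENNReal.ofReal p) μ →
    (∫⁻ x, M f x ^ p ∂μ) ^ (1 / p) ≤ C * eLpNorm f (ENNReal.ofReal p) μ}

/-- The best constant in the `L^∞` inequality for a maximal operator `M`. -/
def supConst (μ : Measure X) (M : (X → ℝ) → X → ℝ≥0∞) : ℝ≥0∞ :=
  sInf {C | ∀ f : X → ℝ, MemLp f ∞ μ → essSup (M f) μ ≤ C * eLpNorm f ∞ μ}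

/-- The best constant `C_M(X, p)` for `p ∈ [1,∞]`: the weak type (1,1) constant for `p = 1`,
the `L^∞` constant for `p = ∞`, and the strong type (p,p) constant for `p ∈ (1,∞)`. -/
def bestConst (μ : Measure X) (M : (X → ℝ) → X → ℝ≥0∞) (p : ℝ≥0∞) : ℝ≥0∞ :=
  if p = 1 then weakConst μ M
  else if p = ∞ then supConst μ M
  else strongConst μ M p.toReal

/-- The shift `l ↦ l + 1` on `ℤ`, the transformation of the canonical system `X₁`. -/
def shiftZ : Equiv.Perm ℤ := Equiv.addRight 1

/-- Ergodicity of an invertible transformation: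
`T⁻¹(E) = E` implies `μ(E) = 0` or `μ(X \ E) = 0`. -/
def IsErgodicPerm (μ : Measure X) (T : Equiv.Perm X) : Prop :=
  ∀ E : Set X, MeasurableSet E → (⇑T) ⁻¹' E = E → μ E = 0 ∨ μ Eᶜ = 0

/-- Nontriviality of a measure space: there is a set of strictly positive finite measure. -/
def NontrivialSpace (μ : Measure X) : Prop :=
  ∃ E : Set X, MeasurableSet E ∧ 0 < μ E ∧ μ E < ∞

/-- `X` consists of finitely many atoms: it splits into disjoint measurable sets
`X₀, X₁, …, X_L` with `μ(X₀) = 0`, `T(X_l) ⊆ X_{l+1}` for `1 ≤ l ≤ L-1`, `T(X_L) ⊆ X₁`, and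
no `X_l`, `1 ≤ l ≤ L`, splits into two disjoint measurable sets of nonzero measure. -/
def FinitelyManyAtoms (μ : Measure X) (T : Equiv.Perm X) : Prop :=
  ∃ (L : ℕ) (A : ℕ → Set X), 0 < L ∧
    (∀ l, l ≤ L → MeasurableSet (A l)) ∧
    (∀ l l', l ≤ L → l' ≤ L → l ≠ l' → Disjoint (A l) (A l')) ∧
    (⋃ l ≤ L, A l) = Set.univ ∧
    μ (A 0) = 0 ∧
    (∀ l, 1 ≤ l → l ≤ L - 1 → ⇑T '' A l ⊆ A (l + 1)) ∧
    (⇑T '' A L ⊆ A 1) ∧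
    (∀ l, 1 ≤ l → l ≤ L → ∀ S : Set X, MeasurableSet S → S ⊆ A l →
      μ S = 0 ∨ μ (A l \ S) = 0)

/-- The Rokhlin condition (case (B) of the Kakutani–Rokhlin lemma): for each `L ∈ ℕ` there is
a set `E_L` of strictly positive finite measure with `T^{-l}(E_L)`, `l ∈ [L]`, disjoint. -/
def RokhlinCondition (μ : Measure X) (T : Equiv.Perm X) : Prop :=
  ∀ L : ℕ, 0 < L → ∃ E : Set X, MeasurableSet E ∧ 0 < μ E ∧ μ E < ∞ ∧
    ∀ l l' : ℕ, 1 ≤ l → l ≤ L → 1 ≤ l' → l' ≤ L → l ≠ l' →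
      Disjoint ((⇑(T ^ l)) ⁻¹' E) ((⇑(T ^ l')) ⁻¹' E)


/-- The uncentered Hardy–Littlewood maximal operator on `ℝ`:
`M_ℝ^u g(x) = sup { (1/|I|) ∫_I |g| : I a bounded interval containing x }`. -/
def maxRU (g : ℝ → ℝ) (x : ℝ) : ℝ≥0∞ :=
  ⨆ (a : ℝ) (b : ℝ) (_ : a ≤ x) (_ : x ≤ b) (_ : a < b),
    (∫⁻ y in Set.Ioo a b, (‖g y‖₊ : ℝ≥0∞)) / ENNReal.ofReal (b - a)

/-! A window `{l - r, …, l + s}` of `r + s + 1` integers corresponds to the real interval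
`(l - r, l + s + 1)` of the same length, which contains every `x ∈ [l, l + 1)`, and the integral of
`|f_cont|` over it is `∑ |f|`; so every discrete average is dominated by a continuous one. For the
norms, the push-forward of Lebesgue measure under `⌊·⌋` is counting measure on `ℤ`: hence
`‖f_cont‖_p = ‖f‖_p`, and `‖M^u f‖_p ≤ ‖M_ℝ^u f_cont‖_p` follows by integrating the pointwise bound
at `l = ⌊x⌋`. -/

lemma shiftZ_zpow_apply (n l : ℤ) : (shiftZ ^ n) l = l + n := by
  simp [shiftZ]

lemma sum_Icc_shiftZ_zpow {M : Type*} [AddCommMonoid M] (f : ℤ → M) (l a b : ℤ) :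
    ∑ n ∈ Finset.Icc a b, f ((shiftZ ^ n) l) = ∑ k ∈ Finset.Icc (l + a) (l + b), f k := by
  rw [← Finset.image_add_left_Icc, Finset.sum_image (add_right_injective l).injOn]
  simp_rw [shiftZ_zpow_apply]

lemma map_floor_volume_eq_count : (volume : Measure ℝ).map Int.floor = Measure.count := by
  refine Measure.ext_of_singleton fun k => ?_
  rw [Measure.map_apply Int.measurable_floor (measurableSet_singleton k),
    Int.preimage_floor_singleton, Real.volume_Ico, Measure.count_singleton]
  simp

lemma Int.preimage_floor_Icc {R : Type*} [Ring R] [LinearOrder R] [IsOrderedRing R]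
    [FloorRing R] (a b : ℤ) : (Int.floor : R → ℤ) ⁻¹' Set.Icc a b = Set.Ico (a : R) (b + 1) := by
  ext x
  simp [Int.le_floor, Int.floor_le_iff]

lemma setLIntegral_Ioo_comp_floor (g : ℤ → ℝ≥0∞) (a b : ℤ) :
    ∫⁻ x in Set.Ioo (a : ℝ) (b + 1), g ⌊x⌋ = ∑ k ∈ Finset.Icc a b, g k := by
  rw [setLIntegral_congr Ioo_ae_eq_Ico, ← Int.preimage_floor_Icc, ← Finset.coe_Icc,
    ← setLIntegral_map (Finset.measurableSet _) .of_discrete Int.measurable_floor,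
    map_floor_volume_eq_count, lintegral_finset]
  simp

lemma eLpNorm_comp_floor {E : Type*} [NormedAddCommGroup E] (f : ℤ → E) (p : ℝ≥0∞) :
    eLpNorm (fun x : ℝ => f ⌊x⌋) p volume = eLpNorm f p Measure.count := by
  rw [← map_floor_volume_eq_count,
    eLpNorm_map_measure .of_discrete Int.measurable_floor.aemeasurable]
  rfl

lemma nnnorm_sum_div_le_maxRU_comp_floor (g : ℤ → ℝ) {a b : ℤ} (hab : a ≤ b) {x : ℝ}
    (hax : a ≤ x) (hxb : x ≤ b + 1) :
    (‖(∑ k ∈ Finset.Icc a b, g k) / ((b : ℝ) + 1 - a)‖₊ : ℝ≥0∞) ≤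
      maxRU (fun y => g ⌊y⌋) x := by
  have hlen : (0 : ℝ) < b + 1 - a := by
    have : (a : ℝ) ≤ b := Int.cast_le.2 hab
    linarith
  calc (‖(∑ k ∈ Finset.Icc a b, g k) / ((b : ℝ) + 1 - a)‖₊ : ℝ≥0∞)
      = ‖∑ k ∈ Finset.Icc a b, g k‖ₑ / ENNReal.ofReal (b + 1 - a) := by
        rw [nnnorm_div, ENNReal.coe_div (nnnorm_pos.2 hlen.ne').ne',
          ← Real.enorm_of_nonneg hlen.le]
        rfl
    _ ≤ (∑ k ∈ Finset.Icc a b, ‖g k‖ₑ) / ENNReal.ofReal (b + 1 - a) := by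
        gcongr; exact enorm_sum_le _ _
    _ = (∫⁻ y in Set.Ioo (a : ℝ) (b + 1), ‖g ⌊y⌋‖₊) / ENNReal.ofReal (b + 1 - a) := by
        rw [← setLIntegral_Ioo_comp_floor (fun k => ‖g k‖ₑ)]
        rfl
    _ ≤ maxRU (fun y => g ⌊y⌋) x :=
        le_iSup₂_of_le (a : ℝ) ((b : ℝ) + 1) <| le_iSup₂_of_le hax hxb <|
          le_iSup_of_le (by linarith) le_rfl

theorem maxU_shiftZ_le_maxRU_comp_floor (f : ℤ → ℝ) {l : ℤ} {x : ℝ} (hlx : l ≤ x)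
    (hxl : x < l + 1) : maxU shiftZ f l ≤ maxRU (fun y => f ⌊y⌋) x := by
  refine iSup₂_le fun r s => ?_
  have hlen : (r : ℝ) + s + 1 = ((l + s : ℤ) : ℝ) + 1 - ((l + -r : ℤ) : ℝ) := by
    push_cast; ring
  rw [sum_Icc_shiftZ_zpow, hlen]
  refine nnnorm_sum_div_le_maxRU_comp_floor f (by omega) ?_ ?_ <;> push_cast
  · linarith [(Nat.cast_nonneg r : (0 : ℝ) ≤ r)]
  · linarith [(Nat.cast_nonneg s : (0 : ℝ) ≤ s)]

theorem lintegral_maxU_shiftZ_rpow_le (f : ℤ → ℝ) {p : ℝ} (hp : 0 ≤ p) :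
    ∫⁻ l, maxU shiftZ f l ^ p ∂Measure.count ≤ ∫⁻ x, maxRU (fun y => f ⌊y⌋) x ^ p := by
  rw [← map_floor_volume_eq_count, lintegral_map .of_discrete Int.measurable_floor]
  exact lintegral_mono fun x => ENNReal.rpow_le_rpow
    (maxU_shiftZ_le_maxRU_comp_floor f (Int.floor_le x) (Int.lt_floor_add_one x)) hp

theorem discrete_dominated_by_continuous_general (f : ℤ → ℝ)
    (fcont : ℝ → ℝ) (hfcont : ∀ x : ℝ, fcont x = f ⌊x⌋) :
    (∀ (l : ℤ) (x : ℝ), (l : ℝ) ≤ x → x < (l : ℝ) + 1 → maxU shiftZ f l ≤ maxRU fcont x) ∧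
    ∀ p : ℝ, 1 < p → f ≠ 0 → MemLp f (ENNReal.ofReal p) (Measure.count : Measure ℤ) →
      (∫⁻ l, maxU shiftZ f l ^ p ∂(Measure.count : Measure ℤ)) ^ (1 / p) /
          eLpNorm f (ENNReal.ofReal p) (Measure.count : Measure ℤ) ≤
        (∫⁻ x, maxRU fcont x ^ p) ^ (1 / p) /
          eLpNorm fcont (ENNReal.ofReal p) (volume : Measure ℝ) := by
  obtain rfl : fcont = fun x => f ⌊x⌋ := funext hfcont
  refine ⟨fun l x => maxU_shiftZ_le_maxRU_comp_floor f, fun p hp _ _ => ?_⟩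
  rw [eLpNorm_comp_floor]
  gcongr
  exact lintegral_maxU_shiftZ_rpow_le f (one_pos.trans hp).le

/-- For a nonnegative `f : ℤ → [0,∞)` with step extension `f_cont(x) = f(⌊x⌋)`:
pointwise domination `M^u f(l) ≤ M_ℝ^u f_cont(x)` for `x ∈ [l, l+1)`, and consequently for
`p ∈ (1,∞)` and `f ∈ ℓ^p(ℤ)` nonzero,
`‖M^u f‖_{ℓ^p} / ‖f‖_{ℓ^p} ≤ ‖M_ℝ^u f_cont‖_{L^p} / ‖f_cont‖_{L^p}`. -/
theorem discrete_dominated_by_continuous (f : ℤ → ℝ) (hf : ∀ l, 0 ≤ f l)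
    (fcont : ℝ → ℝ) (hfcont : ∀ x : ℝ, fcont x = f ⌊x⌋) :
    (∀ (l : ℤ) (x : ℝ), (l : ℝ) ≤ x → x < (l : ℝ) + 1 → maxU shiftZ f l ≤ maxRU fcont x) ∧
    ∀ p : ℝ, 1 < p → f ≠ 0 → MemLp f (ENNReal.ofReal p) (Measure.count : Measure ℤ) →
      (∫⁻ l, maxU shiftZ f l ^ p ∂(Measure.count : Measure ℤ)) ^ (1 / p) /
          eLpNorm f (ENNReal.ofReal p) (Measure.count : Measure ℤ) ≤
        (∫⁻ x, maxRU fcont x ^ p) ^ (1 / p) /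
          eLpNorm fcont (ENNReal.ofReal p) (volume : Measure ℝ) :=
  discrete_dominated_by_continuous_general f fcont hfcont

end
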